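/- For every integer n ≥ 0 and every ω ∈ ℂ, ∫_{−∞}^{∞} H_n(y) e^{iωy} e^{−y²} dy = √π · (iω)ⁿ · e^{−ω²/4}. -/

import Mathlib

open MeasureTheory Set Filter Finset Complex Topology

noncomputable section

/-- The physicists' Hermite polynomials: H₀ = 1, Hₙ₊₁ = 2x·Hₙ − Hₙ'. -/
def hermitePhys : ℕ → Polynomial ℝ
  | 0 => 1
  | n + 1 => 2 * Polynomial.X * hermitePhys n - Polynomial.derivative (hermitePhys n)

/-!
Write `E(t) = e^{iωt - t²}`. Since `(P E)' = (iω P - (2tP - P')) E` and `P E` is integrable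
together with its derivative, `∫ (2tP - P') E = iω ∫ P E` for every real polynomial `P`.
The recurrence `Hₙ₊₁ = 2tHₙ - Hₙ'` therefore multiplies the integral by `iω` at each step,
starting from the Gaussian integral `∫ E = √π e^{-ω²/4}`.
-/

open Polynomial

def modulatedGaussian (w : ℂ) (t : ℝ) : ℂ := cexp (I * w * t - (t : ℂ) ^ 2)

lemma cexp_mul_exp_neg_sq (w : ℂ) (t : ℝ) :
    cexp (I * w * t) * (Real.exp (-t ^ 2) : ℂ) = modulatedGaussian w t := by
  rw [modulatedGaussian, sub_eq_add_neg, Complex.exp_add, Complex.ofReal_exp]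
  push_cast
  rfl

lemma norm_modulatedGaussian_le (w : ℂ) (t : ℝ) :
    ‖modulatedGaussian w t‖ ≤ Real.exp (w.im ^ 2 / 2) * Real.exp (-(1 / 2) * t ^ 2) := by
  have hre : (I * w * t - (t : ℂ) ^ 2).re = -(w.im * t) - t ^ 2 := by
    simp [Complex.mul_re, sq]
  rw [modulatedGaussian, Complex.norm_exp, hre, ← Real.exp_add]
  exact Real.exp_le_exp.2 (by nlinarith [sq_nonneg (w.im + t)])

lemma integrable_pow_mul_modulatedGaussian (k : ℕ) (w : ℂ) :
    Integrable fun t : ℝ ↦ (t : ℂ) ^ k * modulatedGaussian w t := by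
  have hdom : Integrable fun t : ℝ ↦
      Real.exp (w.im ^ 2 / 2) * (|t| ^ k * Real.exp (-(1 / 2) * t ^ 2)) := by
    refine Integrable.const_mul ?_ _
    refine (integrable_rpow_mul_exp_neg_mul_sq (b := 1 / 2) (by norm_num)
      (s := k) (neg_one_lt_zero.trans_le k.cast_nonneg)).abs.congr
      (Eventually.of_forall fun t ↦ ?_)
    simp [abs_mul, Real.rpow_natCast, abs_pow, Real.abs_exp]
  refine hdom.mono' (by unfold modulatedGaussian; fun_prop) (Eventually.of_forall fun t ↦ ?_)
  rw [norm_mul, norm_pow, Complex.norm_real, Real.norm_eq_abs, mul_left_comm]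
  exact mul_le_mul_of_nonneg_left (norm_modulatedGaussian_le w t) (by positivity)

lemma integrable_eval_mul_modulatedGaussian (P : ℝ[X]) (w : ℂ) :
    Integrable fun t : ℝ ↦ ((P.eval t : ℝ) : ℂ) * modulatedGaussian w t := by
  induction P using Polynomial.induction_on' with
  | add p q hp hq =>
    refine (hp.add hq).congr (Eventually.of_forall fun t ↦ ?_)
    simp [add_mul]
  | monomial k a =>
    refine ((integrable_pow_mul_modulatedGaussian k w).const_mul (a : ℂ)).congr
      (Eventually.of_forall fun t ↦ ?_)
    simp [mul_assoc]

lemma hasDerivAt_modulatedGaussian (w : ℂ) (t : ℝ) :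
    HasDerivAt (modulatedGaussian w) ((I * w - 2 * t) * modulatedGaussian w t) t := by
  have hid : HasDerivAt (fun t : ℝ ↦ (t : ℂ)) 1 t := (hasDerivAt_id t).ofReal_comp
  have hexponent : HasDerivAt (fun t : ℝ ↦ I * w * t - (t : ℂ) ^ 2) (I * w - 2 * t) t :=
    ((hid.const_mul (I * w)).sub (hid.pow 2)).congr_deriv (by simp)
  exact hexponent.cexp.congr_deriv (mul_comm _ _)

lemma hasDerivAt_eval_mul_modulatedGaussian (P : ℝ[X]) (w : ℂ) (t : ℝ) :
    HasDerivAt (fun t : ℝ ↦ ((P.eval t : ℝ) : ℂ) * modulatedGaussian w t)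
      (I * w * (((P.eval t : ℝ) : ℂ) * modulatedGaussian w t)
        - (((2 * X * P - derivative P).eval t : ℝ) : ℂ) * modulatedGaussian w t) t := by
  refine ((P.hasDerivAt t).ofReal_comp.mul (hasDerivAt_modulatedGaussian w t)).congr_deriv ?_
  simp only [eval_sub, eval_mul, eval_ofNat, eval_X]
  push_cast
  ring

lemma integral_eval_mul_modulatedGaussian_recurrence (P : ℝ[X]) (w : ℂ) :
    ∫ t : ℝ, (((2 * X * P - derivative P).eval t : ℝ) : ℂ) * modulatedGaussian w t
      = I * w * ∫ t : ℝ, ((P.eval t : ℝ) : ℂ) * modulatedGaussian w t := by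
  have hP := integrable_eval_mul_modulatedGaussian P w
  have hQ := integrable_eval_mul_modulatedGaussian (2 * X * P - derivative P) w
  have hzero := integral_eq_zero_of_hasDerivAt_of_integrable
    (hasDerivAt_eval_mul_modulatedGaussian P w) ((hP.const_mul (I * w)).sub hQ) hP
  rw [integral_sub (hP.const_mul _) hQ, integral_const_mul] at hzero
  linear_combination -hzero

lemma integral_modulatedGaussian (w : ℂ) :
    ∫ t : ℝ, modulatedGaussian w t = (Real.sqrt Real.pi : ℂ) * cexp (-w ^ 2 / 4) := by
  have h := integral_cexp_quadratic (b := -1) (by simp) (I * w) 0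
  simp only [modulatedGaussian]
  convert h using 3 with t
  · ring_nf
  · rw [neg_neg, div_one, Real.sqrt_eq_rpow, Complex.ofReal_cpow Real.pi_pos.le]
    norm_num
  · rw [mul_pow, I_sq]
    ring

lemma integral_hermitePhys_mul_modulatedGaussian (n : ℕ) (w : ℂ) :
    ∫ t : ℝ, (((hermitePhys n).eval t : ℝ) : ℂ) * modulatedGaussian w t
      = (Real.sqrt Real.pi : ℂ) * (I * w) ^ n * cexp (-w ^ 2 / 4) := by
  induction n with
  | zero => simp [hermitePhys, integral_modulatedGaussian]
  | succ n ih =>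
    rw [hermitePhys, integral_eval_mul_modulatedGaussian_recurrence, ih]
    ring

/-- the Fourier transform of Hₙ(y)e^{−y²}. -/
theorem hermite_gaussian_fourier (n : ℕ) (w : ℂ) :
    ∫ t : ℝ, (((hermitePhys n).eval t : ℝ) : ℂ) * Complex.exp (Complex.I * w * t) *
        Real.exp (-t ^ 2)
      = (Real.sqrt Real.pi : ℂ) * (Complex.I * w) ^ n * Complex.exp (-w ^ 2 / 4) := by
  rw [← integral_hermitePhys_mul_modulatedGaussian]
  congr 1 with t
  rw [mul_assoc, cexp_mul_exp_neg_sq]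

end
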